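/- Let 𝓕 be an ω-closed family of nonempty inductive subsets of ω and let S = B_ω^𝓕 ∪ {0} be B_ω^𝓕 with an adjoined zero. Then there is exactly one compact Hausdorff shift-continuous topology on S, namely the topology in which every element of B_ω^𝓕 is isolated and the neighbourhoods of 0 are exactly the sets U ⊆ S with 0 ∈ U and S \ U finite. -/

import Mathlib

/-!
Every member of `𝓕` is a ray `[m, ∞)`, so an element `(i, j, F)` of `B_ω^𝓕` is determined by
`(i, j, min F) ∈ ℕ³`. In a Hausdorff space the points moved by a continuous self-map form an open
set. Translating by the idempotents `(i+1, i+1, F)` on the left, `(j+1, j+1, F)` on the right and,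
if `𝓕` has a member with minimum above `i + min F`, by `(0, 0, G)` on the left moves `(i, j, F)`
but fixes every element outside a finite box of coordinates; so each nonzero point has a finite
neighbourhood and is isolated. Compactness then makes the neighbourhoods of `0` cofinite: the
topology is the one-point compactification of the discrete `B_ω^𝓕`, whose translations are
continuous since they fix `0` and have finite fibres.
-/

/-- For `n : ℕ` and `F ⊆ ω`, `wShift n F` is the set `(−n)+F = {x ∈ ω : x + n ∈ F}`. -/
def wShift (n : ℕ) (F : Set ℕ) : Set ℕ := {x | x + n ∈ F}

/-- A family `𝓕` of subsets of `ω` is ω-closed if `F₁ ∩ ((−n)+F₂) ∈ 𝓕`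
for all `n ∈ ω` and `F₁, F₂ ∈ 𝓕`. -/
def OmegaClosed (𝓕 : Set (Set ℕ)) : Prop :=
  ∀ n : ℕ, ∀ F₁ ∈ 𝓕, ∀ F₂ ∈ 𝓕, F₁ ∩ wShift n F₂ ∈ 𝓕

/-- A subset `F ⊆ ω` is inductive if `n ∈ F` implies `n+1 ∈ F`. -/
def InductiveSet (F : Set ℕ) : Prop := ∀ n : ℕ, n ∈ F → n + 1 ∈ F

/-- The underlying set `ω × ω × 𝓕` of the semigroup `B_ω^𝓕`. -/
abbrev BF (𝓕 : Set (Set ℕ)) : Type := ℕ × ℕ × {F : Set ℕ // F ∈ 𝓕}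

/-- The multiplication of the semigroup `B_ω^𝓕`:
`(i₁,j₁,F₁)·(i₂,j₂,F₂) = (i₁−j₁+i₂, j₂, ((j₁−i₂)+F₁) ∩ F₂)` if `j₁ ≤ i₂`, and
`(i₁, j₁−i₂+j₂, F₁ ∩ ((i₂−j₁)+F₂))` if `j₁ ≥ i₂`. -/
def BFmul {𝓕 : Set (Set ℕ)} (h : OmegaClosed 𝓕) (a b : BF 𝓕) : BF 𝓕 :=
  if a.2.1 ≤ b.1 then
    (a.1 + (b.1 - a.2.1), b.2.1,
      ⟨wShift (b.1 - a.2.1) a.2.2.1 ∩ b.2.2.1, by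
        rw [Set.inter_comm]; exact h _ _ b.2.2.2 _ a.2.2.2⟩)
  else
    (a.1, b.2.1 + (a.2.1 - b.1),
      ⟨a.2.2.1 ∩ wShift (a.2.1 - b.1) b.2.2.1, h _ _ a.2.2.2 _ b.2.2.2⟩)

/-- `B_ω^𝓕` with an adjoined zero; `none` plays the role of the zero `0`. -/
abbrev BF0 (𝓕 : Set (Set ℕ)) : Type := Option (BF 𝓕)

/-- The multiplication of the semigroup `B_ω^𝓕` with an adjoined zero. -/
def BF0mul {𝓕 : Set (Set ℕ)} (h : OmegaClosed 𝓕) : BF0 𝓕 → BF0 𝓕 → BF0 𝓕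
  | some a, some b => some (BFmul h a b)
  | _, _ => none

theorem InductiveSet.eq_Ici_sInf {F : Set ℕ} (hF : InductiveSet F) (hne : F.Nonempty) :
    F = Set.Ici (sInf F) := by
  refine Set.Subset.antisymm (fun x hx => Nat.sInf_le hx) fun x hx => ?_
  obtain ⟨k, rfl⟩ := Nat.exists_eq_add_of_le (Set.mem_Ici.mp hx)
  induction k with
  | zero => exact Nat.sInf_mem hne
  | succ k ih => exact hF _ (ih (by simp))

theorem wShift_Ici (k m : ℕ) : wShift k (Set.Ici m) = Set.Ici (m - k) := by
  ext x
  simp only [wShift, Set.mem_ofPred_eq, Set.mem_Ici]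
  omega

section Coordinates

variable {𝓕 : Set (Set ℕ)}

noncomputable def minF (G : {F : Set ℕ // F ∈ 𝓕}) : ℕ := sInf G.1

noncomputable def coords (y : BF 𝓕) : ℕ × ℕ × ℕ := (y.1, y.2.1, minF y.2.2)

variable (hne : ∀ F ∈ 𝓕, F.Nonempty) (hind : ∀ F ∈ 𝓕, InductiveSet F)
include hne hind

theorem eq_Ici_minF (G : {F : Set ℕ // F ∈ 𝓕}) : G.1 = Set.Ici (minF G) :=
  (hind _ G.2).eq_Ici_sInf (hne _ G.2)

theorem coords_injective : Function.Injective (coords (𝓕 := 𝓕)) := by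
  rintro ⟨i, j, G⟩ ⟨i', j', G'⟩ h
  simp only [coords, Prod.mk.injEq] at h
  obtain ⟨rfl, rfl, hG⟩ := h
  have : G = G' := Subtype.ext (by rw [eq_Ici_minF hne hind G, eq_Ici_minF hne hind G', hG])
  rw [this]

theorem finite_setOf_coords_le (N : ℕ × ℕ × ℕ) : {y : BF 𝓕 | coords y ≤ N}.Finite :=
  (Set.finite_Iic N).preimage (coords_injective hne hind).injOn

theorem coords_BFmul (hcl : OmegaClosed 𝓕) (a b : BF 𝓕) :
    coords (BFmul hcl a b) =
      if a.2.1 ≤ b.1 then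
        (a.1 + (b.1 - a.2.1), b.2.1, max (minF a.2.2 - (b.1 - a.2.1)) (minF b.2.2))
      else (a.1, b.2.1 + (a.2.1 - b.1), max (minF a.2.2) (minF b.2.2 - (a.2.1 - b.1))) := by
  unfold BFmul
  split_ifs <;>
  · simp only [coords, minF]
    rw [eq_Ici_minF hne hind a.2.2, eq_Ici_minF hne hind b.2.2, wShift_Ici, Set.Ici_inter_Ici]
    simp only [csInf_Ici]

end Coordinates

section Translations

variable {𝓕 : Set (Set ℕ)} (hcl : OmegaClosed 𝓕)
  (hne : ∀ F ∈ 𝓕, F.Nonempty) (hind : ∀ F ∈ 𝓕, InductiveSet F)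
include hne hind

theorem BFmul_idempotent_left_eq_self_iff (k : ℕ) (G : {F : Set ℕ // F ∈ 𝓕}) (y : BF 𝓕) :
    BFmul hcl (k, k, G) y = y ↔ k ≤ y.1 ∧ minF G ≤ minF y.2.2 + (y.1 - k) := by
  rw [← (coords_injective hne hind).eq_iff, coords_BFmul hne hind]
  split_ifs with h <;> simp only [coords, Prod.mk.injEq, true_and] at h ⊢ <;> omega

theorem BFmul_idempotent_right_eq_self_iff (k : ℕ) (G : {F : Set ℕ // F ∈ 𝓕}) (y : BF 𝓕) :
    BFmul hcl y (k, k, G) = y ↔ k ≤ y.2.1 ∧ minF G ≤ minF y.2.2 + (y.2.1 - k) := by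
  rw [← (coords_injective hne hind).eq_iff, coords_BFmul hne hind]
  split_ifs with h <;> simp only [coords, Prod.mk.injEq, true_and] at h ⊢ <;> omega

theorem finite_setOf_BFmul_left_eq (a c : BF 𝓕) : {b | BFmul hcl a b = c}.Finite := by
  refine (finite_setOf_coords_le hne hind (c.1 + a.2.1, c.2.1, minF c.2.2 + a.2.1)).subset
    fun b hb => ?_
  have h := congrArg coords hb
  rw [coords_BFmul hne hind] at h
  split_ifs at h <;>
  · simp only [coords, Prod.mk.injEq] at h
    simp only [Set.mem_ofPred_eq, coords, Prod.mk_le_mk]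
    omega

theorem finite_setOf_BFmul_right_eq (a c : BF 𝓕) : {b | BFmul hcl b a = c}.Finite := by
  refine (finite_setOf_coords_le hne hind (c.1, c.2.1 + a.1, minF c.2.2 + a.1)).subset
    fun b hb => ?_
  have h := congrArg coords hb
  rw [coords_BFmul hne hind] at h
  split_ifs at h <;>
  · simp only [coords, Prod.mk.injEq] at h
    simp only [Set.mem_ofPred_eq, coords, Prod.mk_le_mk]
    omega

end Translations

open Filter Topology

theorem Continuous.eventually_ne_self {X : Type*} [TopologicalSpace X] [T2Space X] {f : X → X}
    (hf : Continuous f) {x : X} (hx : f x ≠ x) : ∀ᶠ z in 𝓝 x, f z ≠ z :=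
  (isOpen_ne_fun hf continuous_id).mem_nhds hx

section IsolatedPoints

variable {X : Type*} [TopologicalSpace X] [T1Space X] [CompactSpace X] {a : X}
  (h : ∀ x ≠ a, IsOpen {x})
include h

theorem isOpen_iff_finite_compl_of_isOpen_singleton {U : Set X} :
    IsOpen U ↔ (a ∈ U → Uᶜ.Finite) := by
  refine ⟨fun hU ha => hU.isClosed_compl.isCompact.finite ?_, fun hU => ?_⟩
  · refine isDiscrete_iff_forall_mem_exists_isOpen.2 fun x hx => ⟨{x}, h x ?_, ?_⟩
    · rintro rfl
      exact hx ha
    · exact Set.singleton_inter_of_mem hx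
  · by_cases ha : a ∈ U
    · simpa using (hU ha).isClosed.isOpen_compl
    · rw [← Set.biUnion_of_singleton U]
      exact isOpen_biUnion fun x hx => h x (ne_of_mem_of_not_mem hx ha)

theorem mem_nhds_iff_finite_compl_of_isOpen_singleton {U : Set X} :
    U ∈ 𝓝 a ↔ a ∈ U ∧ Uᶜ.Finite := by
  refine ⟨fun hU => ?_, fun ⟨ha, hU⟩ =>
    ((isOpen_iff_finite_compl_of_isOpen_singleton h).2 fun _ => hU).mem_nhds ha⟩
  obtain ⟨V, hVU, hV, ha⟩ := mem_nhds_iff.1 hU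
  exact ⟨hVU ha,
    ((isOpen_iff_finite_compl_of_isOpen_singleton h).1 hV ha).subset (Set.compl_subset_compl.2 hVU)⟩

theorem continuous_of_finite_preimage_singleton {f : X → X} (hfa : f a = a)
    (hf : ∀ x ≠ a, (f ⁻¹' {x}).Finite) : Continuous f := by
  simp_rw [continuous_def, isOpen_iff_finite_compl_of_isOpen_singleton h]
  intro U hU ha
  rw [Set.mem_preimage, hfa] at ha
  exact (hU ha).preimage' fun x hx => hf x (ne_of_mem_of_not_mem ha hx).symm

end IsolatedPoints

section ShiftContinuous

variable {𝓕 : Set (Set ℕ)} {hcl : OmegaClosed 𝓕}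
  (hne : ∀ F ∈ 𝓕, F.Nonempty) (hind : ∀ F ∈ 𝓕, InductiveSet F)

theorem BF0mul_none_right (a : BF0 𝓕) : BF0mul hcl a none = none := by
  cases a <;> rfl

theorem BF0mul_none_left (a : BF0 𝓕) : BF0mul hcl none a = none := rfl

include hne hind

theorem finite_BF0mul_left_preimage_some (a : BF0 𝓕) (c : BF 𝓕) :
    (BF0mul hcl a ⁻¹' {some c}).Finite := by
  cases a with
  | none => simp [Set.preimage, BF0mul_none_left]
  | some a =>
    refine ((finite_setOf_BFmul_left_eq hcl hne hind a c).image some).subset ?_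
    rintro (_ | b) hb
    · cases hb
    · exact ⟨b, Option.some_injective _ hb, rfl⟩

theorem finite_BF0mul_right_preimage_some (a : BF0 𝓕) (c : BF 𝓕) :
    ((BF0mul hcl · a) ⁻¹' {some c}).Finite := by
  cases a with
  | none => simp [BF0mul_none_right]
  | some a =>
    refine ((finite_setOf_BFmul_right_eq hcl hne hind a c).image some).subset ?_
    rintro (_ | b) hb
    · cases hb
    · exact ⟨b, Option.some_injective _ hb, rfl⟩

variable [TopologicalSpace (BF0 𝓕)] [T2Space (BF0 𝓕)]
  (hsh : ∀ a : BF0 𝓕, Continuous (BF0mul hcl a ·) ∧ Continuous (BF0mul hcl · a))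
include hsh

theorem eventually_forall_not_fixed_left {k : ℕ} {G : {F : Set ℕ // F ∈ 𝓕}} {x : BF 𝓕}
    (hx : ¬(k ≤ x.1 ∧ minF G ≤ minF x.2.2 + (x.1 - k))) :
    ∀ᶠ z in 𝓝 (some x), ∀ y ∈ z, ¬(k ≤ y.1 ∧ minF G ≤ minF y.2.2 + (y.1 - k)) := by
  have hmoved : BF0mul hcl (some (k, k, G)) (some x) ≠ some x := fun h =>
    hx ((BFmul_idempotent_left_eq_self_iff hcl hne hind k G x).1 (Option.some_injective _ h))
  filter_upwards [(hsh _).1.eventually_ne_self hmoved] with _ hz y rfl hy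
  exact hz (congrArg some ((BFmul_idempotent_left_eq_self_iff hcl hne hind k G y).2 hy))

theorem eventually_forall_not_fixed_right {k : ℕ} {G : {F : Set ℕ // F ∈ 𝓕}} {x : BF 𝓕}
    (hx : ¬(k ≤ x.2.1 ∧ minF G ≤ minF x.2.2 + (x.2.1 - k))) :
    ∀ᶠ z in 𝓝 (some x), ∀ y ∈ z, ¬(k ≤ y.2.1 ∧ minF G ≤ minF y.2.2 + (y.2.1 - k)) := by
  have hmoved : BF0mul hcl (some x) (some (k, k, G)) ≠ some x := fun h =>
    hx ((BFmul_idempotent_right_eq_self_iff hcl hne hind k G x).1 (Option.some_injective _ h))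
  filter_upwards [(hsh _).2.eventually_ne_self hmoved] with _ hz y rfl hy
  exact hz (congrArg some ((BFmul_idempotent_right_eq_self_iff hcl hne hind k G y).2 hy))

theorem eventually_fst_le (x : BF 𝓕) :
    ∀ᶠ z in 𝓝 (some x), ∀ y ∈ z, y.1 ≤ x.1 + minF x.2.2 :=
  (eventually_forall_not_fixed_left hne hind hsh (k := x.1 + 1) (G := x.2.2) (by omega)).mono
    fun _ h y hy => by have := h y hy; omega

theorem eventually_snd_le (x : BF 𝓕) :
    ∀ᶠ z in 𝓝 (some x), ∀ y ∈ z, y.2.1 ≤ x.2.1 + minF x.2.2 :=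
  (eventually_forall_not_fixed_right hne hind hsh (k := x.2.1 + 1) (G := x.2.2) (by omega)).mono
    fun _ h y hy => by have := h y hy; omega

theorem exists_eventually_minF_le (x : BF 𝓕) :
    ∃ B, ∀ᶠ z in 𝓝 (some x), ∀ y ∈ z, minF y.2.2 ≤ B := by
  by_cases hG : ∃ G : {F : Set ℕ // F ∈ 𝓕}, x.1 + minF x.2.2 < minF G
  · obtain ⟨G, hG⟩ := hG
    exact ⟨minF G, (eventually_forall_not_fixed_left hne hind hsh (k := 0) (G := G)
      (by omega)).mono fun _ h y hy => by have := h y hy; omega⟩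
  · simp only [not_exists, not_lt] at hG
    exact ⟨_, Eventually.of_forall fun _ y _ => hG y.2.2⟩

theorem isOpen_singleton_of_ne_none : ∀ z : BF0 𝓕, z ≠ none → IsOpen {z} := by
  rintro (_ | x) hx
  · contradiction
  obtain ⟨B, hB⟩ := exists_eventually_minF_le hne hind hsh x
  let N : ℕ × ℕ × ℕ := (x.1 + minF x.2.2, x.2.1 + minF x.2.2, B)
  refine isOpen_singleton_of_finite_mem_nhds _ (s := insert none (some '' {y | coords y ≤ N}))
    ?_ (((finite_setOf_coords_le hne hind N).image some).insert none)
  filter_upwards [eventually_fst_le hne hind hsh x, eventually_snd_le hne hind hsh x, hB]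
    with z h₁ h₂ h₃
  cases z with
  | none => exact Set.mem_insert _ _
  | some y => exact Set.mem_insert_of_mem _ ⟨y, ⟨h₁ y rfl, h₂ y rfl, h₃ y rfl⟩, rfl⟩

end ShiftContinuous

theorem exists_compactSpace_t2Space_shift_continuous {𝓕 : Set (Set ℕ)} (hcl : OmegaClosed 𝓕)
    (hne : ∀ F ∈ 𝓕, F.Nonempty) (hind : ∀ F ∈ 𝓕, InductiveSet F) :
    ∃ τ : TopologicalSpace (BF0 𝓕), @CompactSpace _ τ ∧ @T2Space _ τ ∧
      ∀ a : BF0 𝓕, @Continuous _ _ τ τ (BF0mul hcl a ·) ∧ @Continuous _ _ τ τ (BF0mul hcl · a) := by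
  let _ : TopologicalSpace (BF 𝓕) := ⊥
  have : DiscreteTopology (BF 𝓕) := ⟨rfl⟩
  let τ : TopologicalSpace (BF0 𝓕) := inferInstanceAs (TopologicalSpace (OnePoint (BF 𝓕)))
  have : T2Space (BF0 𝓕) := inferInstanceAs (T2Space (OnePoint (BF 𝓕)))
  have : CompactSpace (BF0 𝓕) := inferInstanceAs (CompactSpace (OnePoint (BF 𝓕)))
  have hisolated : ∀ z : BF0 𝓕, z ≠ none → IsOpen {z} := by
    rintro (_ | x) hx
    · contradiction
    · exact Set.image_singleton (f := OnePoint.some) ▸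
        OnePoint.isOpen_image_coe.2 (isOpen_discrete {x})
  refine ⟨τ, inferInstance, inferInstance, fun a => ⟨?_, ?_⟩⟩
  · refine continuous_of_finite_preimage_singleton hisolated (BF0mul_none_right a) ?_
    rintro (_ | c) hc
    · contradiction
    · exact finite_BF0mul_left_preimage_some hne hind a c
  · refine continuous_of_finite_preimage_singleton hisolated (BF0mul_none_left a) ?_
    rintro (_ | c) hc
    · contradiction
    · exact finite_BF0mul_right_preimage_some hne hind a c

/-- Remark 3.8: on `S = B_ω^𝓕 ∪ {0}` (for an ω-closed family `𝓕` of nonempty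
inductive subsets of `ω`) there is exactly one compact Hausdorff shift-continuous
topology, namely the topology in which every element of `B_ω^𝓕` is isolated and the
neighbourhoods of `0` are exactly the sets `U ∋ 0` with finite complement. -/
theorem statement11 (𝓕 : Set (Set ℕ)) (hcl : OmegaClosed 𝓕)
    (hne : ∀ F ∈ 𝓕, F.Nonempty) (hind : ∀ F ∈ 𝓕, InductiveSet F) :
    (∃! τ : TopologicalSpace (BF0 𝓕),
      @CompactSpace _ τ ∧ @T2Space _ τ ∧
        ∀ a : BF0 𝓕, @Continuous _ _ τ τ (fun x => BF0mul hcl a x) ∧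
          @Continuous _ _ τ τ (fun x => BF0mul hcl x a)) ∧
    ∀ τ : TopologicalSpace (BF0 𝓕),
      (@CompactSpace _ τ ∧ @T2Space _ τ ∧
        ∀ a : BF0 𝓕, @Continuous _ _ τ τ (fun x => BF0mul hcl a x) ∧
          @Continuous _ _ τ τ (fun x => BF0mul hcl x a)) →
      (∀ x : BF 𝓕, @IsOpen _ τ {some x}) ∧
      (∀ U : Set (BF0 𝓕), U ∈ @nhds _ τ none ↔ (none ∈ U ∧ Uᶜ.Finite)) := by
  have isolated : ∀ τ : TopologicalSpace (BF0 𝓕), @T2Space _ τ →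
      (∀ a : BF0 𝓕, @Continuous _ _ τ τ (BF0mul hcl a ·) ∧ @Continuous _ _ τ τ (BF0mul hcl · a)) →
      ∀ z : BF0 𝓕, z ≠ none → @IsOpen _ τ {z} :=
    fun _ _ hsh => isOpen_singleton_of_ne_none hne hind hsh
  obtain ⟨τ₀, hC₀, hT₀, hsh₀⟩ := exists_compactSpace_t2Space_shift_continuous hcl hne hind
  refine ⟨⟨τ₀, ⟨hC₀, hT₀, hsh₀⟩, fun τ ⟨hC, hT, hsh⟩ => ?_⟩, fun τ ⟨hC, hT, hsh⟩ => ?_⟩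
  · refine TopologicalSpace.ext_iff.2 fun U => ?_
    rw [@isOpen_iff_finite_compl_of_isOpen_singleton _ τ _ hC _ (isolated τ hT hsh),
      @isOpen_iff_finite_compl_of_isOpen_singleton _ τ₀ _ hC₀ _ (isolated τ₀ hT₀ hsh₀)]
  · exact ⟨fun x => isolated τ hT hsh (some x) (Option.some_ne_none x),
      fun U => @mem_nhds_iff_finite_compl_of_isOpen_singleton _ τ _ hC _ (isolated τ hT hsh) U⟩
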